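/- Let Q ∈ Matrix (Fin N) (Fin N) ℝ be invertible, let P ∈ Matrix (Fin N) (Fin N) ℝ, q, p ∈ ℝ^N, and let 0 < ξ < 1/2 and B ≥ 0 satisfy ‖Q⁻¹·P‖ ≤ ξ (operator norm), ‖Q⁻¹·p‖ ≤ ξ, and ‖Q⁻¹·q‖ ≤ B. Then Q + P is invertible and ‖(Q + P)⁻¹·(q + p) − Q⁻¹·q‖ ≤ 2·(1 + B)·ξ. -/
import Mathlib


open Matrix

/-- Operator (spectral) 2-norm of a real matrix. -/
noncomputable def matOpNorm {m n : ℕ} (A : Matrix (Fin m) (Fin n) ℝ) : ℝ :=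
  ‖LinearMap.toContinuousLinearMap (Matrix.toEuclideanLin A)‖

/-- Matrix-vector product as a map between Euclidean spaces. -/
noncomputable def matVec {m n : ℕ} (A : Matrix (Fin m) (Fin n) ℝ)
    (v : EuclideanSpace ℝ (Fin n)) : EuclideanSpace ℝ (Fin m) :=
  Matrix.toEuclideanLin A v

lemma matVec_eq_clm {n : ℕ} (A : Matrix (Fin n) (Fin n) ℝ)
    (v : EuclideanSpace ℝ (Fin n)) :
    matVec A v = Matrix.toEuclideanCLM (𝕜 := ℝ) A v := rfl

lemma matVec_norm_le {n : ℕ} (A : Matrix (Fin n) (Fin n) ℝ)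
    (v : EuclideanSpace ℝ (Fin n)) : ‖matVec A v‖ ≤ matOpNorm A * ‖v‖ :=
  (LinearMap.toContinuousLinearMap (Matrix.toEuclideanLin A)).le_opNorm v

lemma matVec_mul {n : ℕ} (A B : Matrix (Fin n) (Fin n) ℝ)
    (v : EuclideanSpace ℝ (Fin n)) : matVec (A * B) v = matVec A (matVec B v) := by
  rw [matVec_eq_clm, _root_.map_mul]; rfl

lemma matVec_add {n : ℕ} (A : Matrix (Fin n) (Fin n) ℝ)
    (v w : EuclideanSpace ℝ (Fin n)) : matVec A (v + w) = matVec A v + matVec A w :=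
  map_add (Matrix.toEuclideanLin A) v w

lemma matVec_sub {n : ℕ} (A : Matrix (Fin n) (Fin n) ℝ)
    (v w : EuclideanSpace ℝ (Fin n)) : matVec A (v - w) = matVec A v - matVec A w :=
  map_sub (Matrix.toEuclideanLin A) v w

lemma matVec_one {n : ℕ} (v : EuclideanSpace ℝ (Fin n)) : matVec 1 v = v := by
  rw [matVec_eq_clm, _root_.map_one]; rfl

lemma matVec_add_mat {n : ℕ} (A B : Matrix (Fin n) (Fin n) ℝ)
    (v : EuclideanSpace ℝ (Fin n)) : matVec (A + B) v = matVec A v + matVec B v := by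
  unfold matVec
  rw [map_add]
  rfl

set_option maxHeartbeats 1000000 in
/-- perturbed-linear-solve estimate of Appendix F:
`‖(Q+P)⁻¹(q+p) − Q⁻¹q‖ ≤ 2(1+B)ξ`. -/
theorem perturbed_solve_bound {N : ℕ}
    (Q P : Matrix (Fin N) (Fin N) ℝ) (hQ : IsUnit Q.det)
    (q p : EuclideanSpace ℝ (Fin N))
    (ξ B : ℝ) (hξ0 : 0 < ξ) (hξ : ξ < 1 / 2) (hB : 0 ≤ B)
    (hQP : matOpNorm (Q⁻¹ * P) ≤ ξ)
    (hQp : ‖matVec Q⁻¹ p‖ ≤ ξ)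
    (hQq : ‖matVec Q⁻¹ q‖ ≤ B) :
    IsUnit (Q + P).det ∧
      ‖matVec (Q + P)⁻¹ (q + p) - matVec Q⁻¹ q‖ ≤ 2 * (1 + B) * ξ := by
  set M : Matrix (Fin N) (Fin N) ℝ := Q⁻¹ * P with hM
  set g : EuclideanSpace ℝ (Fin N) →L[ℝ] EuclideanSpace ℝ (Fin N) :=
    Matrix.toEuclideanCLM (𝕜 := ℝ) M with hg
  have hgnorm : ‖g‖ ≤ ξ := hQP
  have hgsmall : ‖-g‖ < 1 := by
    rw [norm_neg]
    exact lt_trans (lt_of_le_of_lt hgnorm hξ) (by norm_num)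
  have hunit_clm : IsUnit (1 + g) := by
    have := (Units.oneSub (-g) hgsmall).isUnit
    simpa [sub_neg_eq_add] using this
  have h1M_unit : IsUnit (1 + M) := by
    have h1 : IsUnit (Matrix.toEuclideanCLM (𝕜 := ℝ) (1 + M)) := by
      rw [map_add, _root_.map_one, ← hg]; exact hunit_clm
    have h2 := h1.map (Matrix.toEuclideanCLM (𝕜 := ℝ)).symm
    simpa using h2
  have h1M_det : IsUnit (1 + M).det := (Matrix.isUnit_iff_isUnit_det _).mp h1M_unit
  have hQQinv : Q * Q⁻¹ = 1 := Matrix.mul_nonsing_inv Q hQ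
  have hfact : Q + P = Q * (1 + M) := by
    rw [mul_add, mul_one, hM, ← mul_assoc, hQQinv, one_mul]
  have hdet : IsUnit (Q + P).det := by
    rw [hfact, Matrix.det_mul]
    exact hQ.mul h1M_det
  refine ⟨hdet, ?_⟩
  have hinv : (Q + P)⁻¹ = (1 + M)⁻¹ * Q⁻¹ := by
    rw [hfact, Matrix.mul_inv_rev]
  set a := matVec Q⁻¹ q with ha
  set b := matVec Q⁻¹ p with hb
  set w := matVec (Q + P)⁻¹ (q + p) - a with hw
  have hRRinv : (1 + M) * (1 + M)⁻¹ = 1 := Matrix.mul_nonsing_inv _ h1M_det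
  have hkey : w + matVec M w = b - matVec M a := by
    have h1 : matVec (1 + M) w = b - matVec M a := by
      rw [hw, matVec_sub, hinv, ← matVec_mul, ← mul_assoc, hRRinv, one_mul,
        matVec_add, ← ha, ← hb, matVec_add_mat, matVec_one]
      abel
    rw [← h1, matVec_add_mat, matVec_one]
  have hMa : ‖matVec M a‖ ≤ ξ * B :=
    (matVec_norm_le M a).trans (mul_le_mul hQP hQq (norm_nonneg _) (le_of_lt hξ0))
  have hMw : ‖matVec M w‖ ≤ ξ * ‖w‖ :=
    (matVec_norm_le M w).trans (mul_le_mul_of_nonneg_right hQP (norm_nonneg _))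
  have h2 : ‖w‖ ≤ ‖b‖ + ‖matVec M a‖ + ‖matVec M w‖ := by
    have heq : ‖w‖ = ‖(b - matVec M a) - matVec M w‖ := by
      congr 1
      rw [← hkey]
      abel
    rw [heq]
    calc ‖(b - matVec M a) - matVec M w‖ ≤ ‖b - matVec M a‖ + ‖matVec M w‖ :=
          norm_sub_le _ _
      _ ≤ ‖b‖ + ‖matVec M a‖ + ‖matVec M w‖ := by
          have := norm_sub_le b (matVec M a); linarith
  have hnormw : ‖w‖ ≤ ξ + ξ * B + ξ * ‖w‖ := by linarith
  have h5 : (1 - ξ) * ‖w‖ ≤ ξ * (1 + B) := by nlinarith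
  nlinarith [norm_nonneg w]
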